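/- arXiv:1312.0695 — 3 statements merged into one kernel-verified Lean document; each statement's English description precedes it below -/
import Mathlib

section
/- Let S_n ⊆ S_{n-1} ⊆ ... ⊆ S_0 be nested nonempty closed convex subsets of ℝ^d, x₀ ∈ S_0, and x_{i+1} = P_{S_{i+1}}(x_i). Then the polygonal curve γ obtained by concatenating the segments [x_0,x_1], [x_1,x_2], ..., [x_{n-1},x_n] (parametrized affinely on consecutive intervals) is self-contracted. -/
open scoped RealInnerProductSpace


/-- A curve `γ` is self-contracted on `I` if for every `t* ∈ I`, the map
`t ↦ ‖γ t - γ t*‖` is nonincreasing on `I ∩ (-∞, t*]`. -/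
def SelfContracted {d : ℕ} (I : Set ℝ) (γ : ℝ → EuclideanSpace ℝ (Fin d)) : Prop :=
  ∀ tstar ∈ I, ∀ s ∈ I, ∀ t ∈ I, s ≤ t → t ≤ tstar →
    ‖γ t - γ tstar‖ ≤ ‖γ s - γ tstar‖

theorem polygonal_projection_curve_selfContracted
    (d n : ℕ) (S : ℕ → Set (EuclideanSpace ℝ (Fin d)))
    (hS : ∀ i ≤ n, (S i).Nonempty ∧ IsClosed (S i) ∧ Convex ℝ (S i))
    (hnest : ∀ i < n, S (i + 1) ⊆ S i)
    (x₀ : EuclideanSpace ℝ (Fin d)) (x : ℕ → EuclideanSpace ℝ (Fin d))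
    (hx0 : x 0 = x₀) (hx0mem : x₀ ∈ S 0)
    (hproj : ∀ i < n, x (i + 1) ∈ S (i + 1) ∧
      ∀ y ∈ S (i + 1), ‖x i - x (i + 1)‖ ≤ ‖x i - y‖)
    (γ : ℝ → EuclideanSpace ℝ (Fin d))
    (hγ : ∀ i < n, ∀ t ∈ Set.Icc (i : ℝ) (i + 1),
      γ t = x i + (t - i) • (x (i + 1) - x i)) :
    SelfContracted (Set.Icc (0 : ℝ) n) γ := by
  -- nested chain of inclusions
  have hchain : ∀ a b : ℕ, a ≤ b → b ≤ n → S b ⊆ S a := by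
    intro a b hab hbn
    induction b with
    | zero => simp_all
    | succ k ih =>
      rcases Nat.lt_or_ge a (k + 1) with h | h
      · exact (hnest k (by omega)).trans (ih (by omega) (by omega))
      · have : a = k + 1 := by omega
        subst this; exact subset_rfl
  -- each vertex belongs to its set
  have hxmem : ∀ j ≤ n, x j ∈ S j := by
    intro j hj
    induction j with
    | zero => rw [hx0]; exact hx0mem
    | succ k _ => exact (hproj k (by omega)).1
  -- variational inequality for the projection
  have hvar : ∀ i, i < n → ∀ y ∈ S (i + 1),
      ⟪x i - x (i + 1), y - x (i + 1)⟫ ≤ 0 := by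
    intro i hi y hy
    obtain ⟨hmem, hmin⟩ := hproj i hi
    have hconv : Convex ℝ (S (i + 1)) := (hS (i + 1) (by omega)).2.2
    have heq : ‖x i - x (i + 1)‖ = ⨅ w : S (i + 1), ‖x i - w‖ := by
      have hne : Nonempty (S (i + 1)) := ⟨⟨x (i + 1), hmem⟩⟩
      refine le_antisymm (le_ciInf fun w => hmin w w.2) ?_
      have hbdd : BddBelow (Set.range fun w : S (i + 1) => ‖x i - (w : EuclideanSpace ℝ (Fin d))‖) := by
        refine ⟨0, ?_⟩
        rintro _ ⟨w, rfl⟩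
        exact norm_nonneg _
      exact ciInf_le hbdd ⟨x (i + 1), hmem⟩
    exact (norm_eq_iInf_iff_real_inner_le_zero hconv hmem).mp heq y hy
  -- points on the curve past time m belong to S m
  have hγmem : ∀ m, m < n → ∀ t : ℝ, (m : ℝ) ≤ t → t ≤ (n : ℝ) → γ t ∈ S m := by
    intro m hm t hmt htn
    have hn1 : 1 ≤ n := by omega
    set j := min (Nat.floor t) (n - 1) with hjdef
    have ht0 : (0 : ℝ) ≤ t := le_trans (by positivity) hmt
    have hj_lt : j < n := lt_of_le_of_lt (min_le_right _ _) (by omega)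
    have hmj : m ≤ j := le_min (Nat.le_floor (by exact_mod_cast hmt)) (by omega)
    have htj : (j : ℝ) ≤ t := by
      calc (j : ℝ) ≤ (Nat.floor t : ℝ) := by exact_mod_cast min_le_left _ _
        _ ≤ t := Nat.floor_le ht0
    have htj1 : t ≤ (j : ℝ) + 1 := by
      rcases le_total (Nat.floor t) (n - 1) with h | h
      · have : j = Nat.floor t := min_eq_left h
        rw [this]
        exact le_of_lt (Nat.lt_floor_add_one t)
      · have hjn : j = n - 1 := min_eq_right h
        have : (j : ℝ) + 1 = (n : ℝ) := by
          rw [hjn]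
          have : ((n - 1 : ℕ) : ℝ) = (n : ℝ) - 1 := by
            push_cast [Nat.cast_sub hn1]; ring
          rw [this]; ring
        rw [this]; exact htn
    have hγt := hγ j hj_lt t ⟨htj, htj1⟩
    have hconv : Convex ℝ (S m) := (hS m (by omega)).2.2
    have hxj : x j ∈ S m := hchain m j hmj (by omega) (hxmem j (by omega))
    have hxj1 : x (j + 1) ∈ S m := hchain m (j + 1) (by omega) (by omega)
      (hxmem (j + 1) (by omega))
    have hrw : x j + (t - (j : ℝ)) • (x (j + 1) - x j)
        = (1 - (t - (j : ℝ))) • x j + (t - (j : ℝ)) • x (j + 1) := by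
      module
    rw [hγt, hrw]
    exact hconv hxj hxj1 (by linarith) (by linarith) (by ring)
  -- monotonicity on a single segment
  have segE : ∀ i, i < n → ∀ tstar s t : ℝ, tstar ≤ (n : ℝ) →
      (i : ℝ) ≤ s → s ≤ t → t ≤ (i : ℝ) + 1 → t ≤ tstar →
      ‖γ t - γ tstar‖ ≤ ‖γ s - γ tstar‖ := by
    intro i hi tstar s t htsn his hst hti1 hts
    have hγs := hγ i hi s ⟨his, by linarith⟩
    have hγt := hγ i hi t ⟨by linarith, hti1⟩
    rcases le_or_gt tstar ((i : ℝ) + 1) with hcase | hcase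
    · have hγts := hγ i hi tstar ⟨by linarith, hcase⟩
      have e1 : γ t - γ tstar = (t - tstar) • (x (i + 1) - x i) := by
        rw [hγt, hγts]; module
      have e2 : γ s - γ tstar = (s - tstar) • (x (i + 1) - x i) := by
        rw [hγs, hγts]; module
      rw [e1, e2, norm_smul, norm_smul]
      have habs : ‖t - tstar‖ ≤ ‖s - tstar‖ := by
        rw [Real.norm_eq_abs, Real.norm_eq_abs, abs_of_nonpos (by linarith),
          abs_of_nonpos (by linarith)]
        linarith
      exact mul_le_mul_of_nonneg_right habs (norm_nonneg _)
    · -- tstar > i + 1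
      set p := γ tstar with hp
      have hpmem : p ∈ S (i + 1) := by
        apply hγmem (i + 1) (by
          have : ((i : ℝ) + 1) < (n : ℝ) := lt_of_lt_of_le hcase htsn
          exact_mod_cast (by push_cast; linarith : ((i + 1 : ℕ) : ℝ) < (n : ℝ)))
          tstar (by push_cast; linarith) htsn
      have hkey : ⟪(x i - p) + (x (i + 1) - x i), x (i + 1) - x i⟫ ≤ 0 := by
        have h := hvar i hi p hpmem
        have e : (x i - p) + (x (i + 1) - x i) = -(p - x (i + 1)) := by abel
        have e2 : x (i + 1) - x i = -(x i - x (i + 1)) := by abel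
        rw [e, e2, inner_neg_neg, real_inner_comm]
        exact h
      set a := x i - p with ha
      set v := x (i + 1) - x i with hv
      have hkey' : ⟪a, v⟫ + ‖v‖ ^ 2 ≤ 0 := by
        rw [inner_add_left, real_inner_self_eq_norm_sq] at hkey
        exact hkey
      have e1 : γ t - p = a + (t - (i : ℝ)) • v := by rw [hγt]; module
      have e2 : γ s - p = a + (s - (i : ℝ)) • v := by rw [hγs]; module
      rw [e1, e2]
      have hsq : ‖a + (t - (i : ℝ)) • v‖ ^ 2 ≤ ‖a + (s - (i : ℝ)) • v‖ ^ 2 := by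
        rw [norm_add_sq_real, norm_add_sq_real, real_inner_smul_right,
          real_inner_smul_right, norm_smul, norm_smul, Real.norm_eq_abs,
          Real.norm_eq_abs, abs_of_nonneg (by linarith : (0:ℝ) ≤ t - (i:ℝ)),
          abs_of_nonneg (by linarith : (0:ℝ) ≤ s - (i:ℝ))]
        have h1 : (0 : ℝ) ≤ t - (i : ℝ) - (s - (i : ℝ)) := by linarith
        have h2 : t - (i : ℝ) + (s - (i : ℝ)) ≤ 2 := by linarith
        nlinarith [sq_nonneg ‖v‖, mul_nonneg h1 (sq_nonneg ‖v‖)]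
      exact (pow_le_pow_iff_left₀ (norm_nonneg _) (norm_nonneg _) two_ne_zero).mp hsq
  -- the main induction
  intro tstar htstar s hs t ht hst hts
  obtain ⟨hts0, htsn⟩ := htstar
  obtain ⟨hs0, _⟩ := hs
  suffices H : ∀ m : ℕ, ∀ s t : ℝ, 0 ≤ s → s ≤ t → t ≤ tstar →
      n ≤ Nat.floor s + m → ‖γ t - γ tstar‖ ≤ ‖γ s - γ tstar‖ by
    exact H n s t hs0 hst hts (by omega)
  intro m
  induction m with
  | zero =>
    intro s t hs0 hst hts hfuel
    have hns : (n : ℝ) ≤ s := by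
      calc (n : ℝ) ≤ (Nat.floor s : ℝ) := by exact_mod_cast (by omega : n ≤ Nat.floor s)
        _ ≤ s := Nat.floor_le hs0
    have : s = t := le_antisymm hst (by linarith)
    rw [this]
  | succ m ih =>
    intro s t hs0 hst hts hfuel
    by_cases hsn' : (n : ℝ) ≤ s
    · have : s = t := le_antisymm hst (by linarith)
      rw [this]
    · have hi_lt : Nat.floor s < n := (Nat.floor_lt hs0).mpr (lt_of_not_ge hsn')
      set i := Nat.floor s with hi
      have his : (i : ℝ) ≤ s := Nat.floor_le hs0
      rcases le_or_gt t ((i : ℝ) + 1) with hcase | hcase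
      · exact segE i hi_lt tstar s t htsn his hst hcase hts
      · have h1 : ‖γ t - γ tstar‖ ≤ ‖γ ((i : ℝ) + 1) - γ tstar‖ := by
          apply ih ((i : ℝ) + 1) t (by positivity) (le_of_lt hcase) hts
          have hfl : Nat.floor ((i : ℝ) + 1) = i + 1 := by
            rw [show ((i : ℝ) + 1) = ((i + 1 : ℕ) : ℝ) by push_cast; ring,
              Nat.floor_natCast]
          rw [hfl]; omega
        have h2 : ‖γ ((i : ℝ) + 1) - γ tstar‖ ≤ ‖γ s - γ tstar‖ :=
          segE i hi_lt tstar s ((i : ℝ) + 1) htsn his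
            (le_of_lt (Nat.lt_floor_add_one s)) le_rfl (by linarith)
        exact le_trans h1 h2
end

section
/- Let γ : [0, L] → ℝ^d be a Lipschitz curve, Q ⊆ ℝ^d a closed convex set, and suppose γ(s) ∈ Q for all s ∈ [s₁, s₂] ⊆ [0, L]. Then for almost every s ∈ (s₁, s₂), the derivative γ'(s) satisfies ⟨γ'(s), v⟩ = 0 for every v ∈ N_Q(γ(s)). -/
open RealInnerProductSpace MeasureTheory

theorem deriv_orthogonal_to_normal_cone_on_set
    (d : ℕ) (L : ℝ) (K : NNReal) (γ : ℝ → EuclideanSpace ℝ (Fin d))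
    (hlip : LipschitzOnWith K γ (Set.Icc 0 L))
    (Q : Set (EuclideanSpace ℝ (Fin d))) (hQcl : IsClosed Q) (hQconv : Convex ℝ Q)
    (s₁ s₂ : ℝ) (hs : s₁ < s₂) (hsub : Set.Icc s₁ s₂ ⊆ Set.Icc 0 L)
    (hmem : ∀ s ∈ Set.Icc s₁ s₂, γ s ∈ Q) :
    ∀ᵐ s ∂(volume : Measure ℝ), s ∈ Set.Ioo s₁ s₂ →
      ∀ v : EuclideanSpace ℝ (Fin d), (∀ y ∈ Q, ⟪v, y - γ s⟫ ≤ 0) →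
        ⟪deriv γ s, v⟫ = 0 := by
  refine Filter.Eventually.of_forall (fun s hs' v hv => ?_)
  by_cases hdiff : DifferentiableAt ℝ γ s
  · -- g t = ⟪v, γ t⟫ has a local max at s
    have hloc : IsLocalMax (fun t => ⟪v, γ t⟫) s := by
      filter_upwards [Ioo_mem_nhds hs'.1 hs'.2] with t ht
      have h1 : ⟪v, γ t - γ s⟫ ≤ 0 := hv _ (hmem t (Set.mem_Icc_of_Ioo ht))
      rw [inner_sub_right] at h1
      linarith
    have hd : HasDerivAt (fun t => ⟪v, γ t⟫) (⟪v, deriv γ s⟫ + ⟪(0 : EuclideanSpace ℝ (Fin d)), γ s⟫) s :=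
      (hasDerivAt_const s v).inner ℝ hdiff.hasDerivAt
    have := hloc.hasDerivAt_eq_zero hd
    rw [inner_zero_left, add_zero] at this
    rw [real_inner_comm]
    exact this
  · rw [deriv_zero_of_not_differentiableAt hdiff, inner_zero_left]
end

section
/- Let γ : [0, L] → ℝ^d be a Lipschitz curve parametrized by arclength (‖γ'(s)‖ = 1 for a.e. s), and let Q be a closed convex set. If for a.e. s in some subinterval [s₁, s₂] with s₁ < s₂ we have γ(s) ∈ ∂Q and -γ'(s) ∈ N_Q(γ(s)), then it is impossible that γ([s₁,s₂]) ⊆ Q; equivalently, the curve cannot remain in a single convex set while its (unit-speed) velocity lies in minus the normal cone almost everywhere. -/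
open RealInnerProductSpace MeasureTheory

theorem unit_speed_normal_velocity_cannot_stay_in_convex_set
    (d : ℕ) (L : ℝ) (K : NNReal) (γ : ℝ → EuclideanSpace ℝ (Fin d))
    (hlip : LipschitzOnWith K γ (Set.Icc 0 L))
    (hunit : ∀ᵐ s ∂(volume : Measure ℝ), s ∈ Set.Icc 0 L → ‖deriv γ s‖ = 1)
    (Q : Set (EuclideanSpace ℝ (Fin d))) (hQcl : IsClosed Q) (hQconv : Convex ℝ Q)
    (s₁ s₂ : ℝ) (hs : s₁ < s₂) (hsub : Set.Icc s₁ s₂ ⊆ Set.Icc 0 L)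
    (hnormal : ∀ᵐ s ∂(volume : Measure ℝ), s ∈ Set.Icc s₁ s₂ →
      ∀ y ∈ Q, ⟪-deriv γ s, y - γ s⟫ ≤ 0) :
    ¬ (∀ s ∈ Set.Icc s₁ s₂, γ s ∈ Q) := by
  intro hin
  -- combine the two a.e. conditions
  have hae : ∀ᵐ s ∂(volume : Measure ℝ),
      (s ∈ Set.Icc 0 L → ‖deriv γ s‖ = 1) ∧
      (s ∈ Set.Icc s₁ s₂ → ∀ y ∈ Q, ⟪-deriv γ s, y - γ s⟫ ≤ 0) := hunit.and hnormal
  -- find a good point in the open interval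
  have hne : (Set.Ioo s₁ s₂ ∩ {s | (s ∈ Set.Icc 0 L → ‖deriv γ s‖ = 1) ∧
      (s ∈ Set.Icc s₁ s₂ → ∀ y ∈ Q, ⟪-deriv γ s, y - γ s⟫ ≤ 0)}).Nonempty := by
    rw [Set.nonempty_iff_ne_empty]
    intro hempty
    have hsubc : Set.Ioo s₁ s₂ ⊆ {s | ¬((s ∈ Set.Icc 0 L → ‖deriv γ s‖ = 1) ∧
        (s ∈ Set.Icc s₁ s₂ → ∀ y ∈ Q, ⟪-deriv γ s, y - γ s⟫ ≤ 0))} := by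
      intro x hx
      intro hPx
      have hmem : x ∈ Set.Ioo s₁ s₂ ∩ {s | (s ∈ Set.Icc 0 L → ‖deriv γ s‖ = 1) ∧
          (s ∈ Set.Icc s₁ s₂ → ∀ y ∈ Q, ⟪-deriv γ s, y - γ s⟫ ≤ 0)} := ⟨hx, hPx⟩
      rw [hempty] at hmem
      exact hmem
    have h0 : volume (Set.Ioo s₁ s₂) = 0 :=
      measure_mono_null hsubc (ae_iff.mp hae)
    rw [Real.volume_Ioo] at h0
    have : s₂ - s₁ ≤ 0 := by
      by_contra hc
      push_neg at hc
      simp [ENNReal.ofReal_eq_zero] at h0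
      linarith
    linarith
  obtain ⟨s₀, hs₀Ioo, hs₀P⟩ := hne
  have hs₀Icc : s₀ ∈ Set.Icc s₁ s₂ := Set.mem_Icc_of_Ioo hs₀Ioo
  have hu : ‖deriv γ s₀‖ = 1 := hs₀P.1 (hsub hs₀Icc)
  have hn : ∀ y ∈ Q, ⟪-deriv γ s₀, y - γ s₀⟫ ≤ 0 := hs₀P.2 hs₀Icc
  have hdiff : DifferentiableAt ℝ γ s₀ := by
    by_contra h
    rw [deriv_zero_of_not_differentiableAt h] at hu
    simp at hu
  set v := deriv γ s₀ with hv
  have hγ' : HasDerivAt γ v s₀ := hdiff.hasDerivAt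
  -- the function t ↦ ⟪v, γ t⟫ has a local minimum at s₀
  have hmin : IsLocalMin (fun t => ⟪v, γ t⟫) s₀ := by
    filter_upwards [Icc_mem_nhds hs₀Ioo.1 hs₀Ioo.2] with t ht
    have h1 := hn (γ t) (hin t ht)
    rw [inner_neg_left, inner_sub_right] at h1
    show ⟪v, γ s₀⟫ ≤ ⟪v, γ t⟫
    linarith
  -- its derivative at s₀ is ⟪v, v⟫ = 1
  have hd : HasDerivAt (fun t => ⟪v, γ t⟫) (⟪v, v⟫) s₀ := by
    have := (hasDerivAt_const s₀ v).inner ℝ hγ'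
    simpa using this
  have hzero : (⟪v, v⟫ : ℝ) = 0 := by
    rw [← hd.deriv]
    exact hmin.deriv_eq_zero
  rw [real_inner_self_eq_norm_sq, hu] at hzero
  norm_num at hzero
end
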